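/- Let u_N solve the semi-discrete Fourier-Galerkin scheme for the fractional ZK equation. Then the discrete Hamiltonian energy H(u_N) = (1/2)\int_\Omega |(-\Delta)^{\alpha/4} u_N|^2 dx - (1/6)\int_\Omega u_N^3 dx is conserved in time: d/dt H(u_N(t)) = 0. -/

import Mathlib

/-!
Along the Galerkin flow each coefficient moves by `ċ_m = i m₁ e_m`, where
`e_m = |m|^α c_m - (c * c)_m / 2` is the variational derivative of `H` with respect to `c_{-m}`.
Since the quadratic form `∑ |m|^α a_m b_{-m}` and the cubic form `∑ a_k b_l c_{-(k+l)}` are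
symmetric (the latter because `u_N` and `∂_t u_N` live on the same symmetric box of modes),
`dH/dt = ∑_m ċ_m e_{-m} = ∑_m i m₁ e_m e_{-m}`, and this vanishes because `i m₁` is odd
under `m ↦ -m`.
-/

/-- Spectral fractional Laplacian symbol `|k|^α` for `k ∈ ℤ²`. -/
noncomputable def fracCoef (α : ℝ) (k : ℤ × ℤ) : ℝ :=
  ((k.1 : ℝ) ^ 2 + (k.2 : ℝ) ^ 2) ^ (α / 2)

/-- The set of Fourier modes `{k ∈ ℤ² : |k|_∞ ≤ N}` of `𝕏_N`. -/
noncomputable def box (N : ℕ) : Finset (ℤ × ℤ) :=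
  Finset.Icc (-(N : ℤ), -(N : ℤ)) ((N : ℤ), (N : ℤ))

/-- Right-hand side of the Fourier–Galerkin scheme
`(∂_t u_N, v) + ((-Δ)^{α/2} u_N, ∂_{x_1} v) - (1/2)(u_N², ∂_{x_1} v) = 0` for all
`v ∈ 𝕏_N`, written mode-by-mode (take `v = e^{i m ⋅ x}`). -/
noncomputable def galerkinRHS (α : ℝ) (N : ℕ) (c : ℤ × ℤ → ℂ) (m : ℤ × ℤ) : ℂ :=
  Complex.I * (m.1 : ℂ) * (fracCoef α m : ℂ) * c m
    - (Complex.I * (m.1 : ℂ) / 2) * ∑ k ∈ box N, c k * c (m - k)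

/-- Discrete Hamiltonian energy
`H(u_N) = (1/2) ∫_Ω |(-Δ)^{α/4} u_N|² dx - (1/6) ∫_Ω u_N³ dx`, written via Parseval in
terms of the Fourier coefficients `c` of `u_N ∈ 𝕏_N`:
`∫ |(-Δ)^{α/4}u_N|² = (2π)² ∑_m |m|^α |c m|²` and
`∫ u_N³ = (2π)² ∑_{k,l} c k c l c (-(k+l))`. -/
noncomputable def discreteHamiltonian (α : ℝ) (N : ℕ) (c : ℤ × ℤ → ℂ) : ℝ :=
  (1 / 2) * (2 * Real.pi) ^ 2 * ∑ m ∈ box N, fracCoef α m * ‖c m‖ ^ 2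
    - (1 / 6) * (2 * Real.pi) ^ 2 *
        (∑ k ∈ box N, ∑ l ∈ box N, c k * c l * c (-(k + l))).re

section Forms

open Finset

variable {G R : Type*} [AddCommGroup G] [CommRing R] (S : Finset G)

def weightedPairing (f a b : G → R) : R := ∑ m ∈ S, f m * a m * b (-m)

def tripleProduct (a b c : G → R) : R := ∑ k ∈ S, ∑ l ∈ S, a k * b l * c (-(k + l))

def truncConv (a b : G → R) (m : G) : R := ∑ k ∈ S, a k * b (m - k)

variable {S}

theorem weightedPairing_neg_index (hS : ∀ m, -m ∈ S ↔ m ∈ S) (f a b : G → R) :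
    weightedPairing S f a b = weightedPairing S (fun m => f (-m)) b a := by
  refine sum_equiv (Equiv.neg G) (fun m => (hS m).symm) fun m _ => ?_
  simp only [Equiv.neg_apply, neg_neg]
  ring

theorem weightedPairing_comm (hS : ∀ m, -m ∈ S ↔ m ∈ S) {f : G → R} (hf : ∀ m, f (-m) = f m)
    (a b : G → R) : weightedPairing S f a b = weightedPairing S f b a := by
  simpa only [hf] using weightedPairing_neg_index hS f a b

theorem weightedPairing_self_eq_zero_of_odd [NoZeroDivisors R] [CharZero R]
    (hS : ∀ m, -m ∈ S ↔ m ∈ S) {w : G → R} (hw : ∀ m, w (-m) = -w m) (a : G → R) :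
    weightedPairing S w a a = 0 := by
  have h := weightedPairing_neg_index hS w a a
  simp only [hw, weightedPairing, neg_mul, sum_neg_distrib] at h
  exact CharZero.eq_neg_self_iff.mp h

theorem sum_mul_neg_add_comm {a b : G → R} (ha : ∀ m ∉ S, a m = 0) (hb : ∀ m ∉ S, b m = 0)
    (l : G) : ∑ k ∈ S, a k * b (-(k + l)) = ∑ k ∈ S, b k * a (-(k + l)) := by
  have toFinsum : ∀ a b : G → R, (∀ m ∉ S, a m = 0) →
      ∑ k ∈ S, a k * b (-(k + l)) = ∑ᶠ k, a k * b (-(k + l)) := fun a b ha =>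
    (finsum_eq_sum_of_support_subset _ fun k hk => by_contra fun hkS =>
      hk (by simp [ha k hkS])).symm
  let σ : G ≃ G := (Equiv.addRight l).trans (Equiv.neg G)
  rw [toFinsum a b ha, toFinsum b a hb, ← finsum_comp_equiv σ]
  congr 1 with k
  simp [σ, mul_comm]

theorem tripleProduct_comm_left (a b c : G → R) :
    tripleProduct S a b c = tripleProduct S b a c := by
  rw [tripleProduct, sum_comm]
  exact sum_congr rfl fun l _ => sum_congr rfl fun k _ => by rw [mul_comm (a k), add_comm]

theorem tripleProduct_swap_left_right {a c : G → R} (ha : ∀ m ∉ S, a m = 0)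
    (hc : ∀ m ∉ S, c m = 0) (b : G → R) : tripleProduct S a b c = tripleProduct S c b a := by
  simp only [tripleProduct]
  rw [sum_comm, sum_comm (s := S) (t := S) (f := fun k l => c k * b l * a (-(k + l)))]
  refine sum_congr rfl fun l _ => ?_
  simp only [mul_right_comm _ (b l), ← sum_mul, sum_mul_neg_add_comm ha hc]

theorem tripleProduct_eq_sum_mul_truncConv (a b c : G → R) :
    tripleProduct S a b c = ∑ k ∈ S, a k * truncConv S b c (-k) := by
  refine sum_congr rfl fun k _ => ?_
  rw [truncConv, mul_sum]
  exact sum_congr rfl fun l _ => by rw [neg_add', mul_assoc]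

end Forms

section Hamiltonian

open Finset

variable {G : Type*} [AddCommGroup G] {S : Finset G}

def cubicHamiltonian {R : Type*} [Field R] (S : Finset G) (f c : G → R) : R :=
  weightedPairing S f c c / 2 - tripleProduct S c c c / 6

theorem HasDerivWithinAt.weightedPairing_self {𝕜 𝔸 : Type*} [NontriviallyNormedField 𝕜]
    [NormedCommRing 𝔸] [NormedAlgebra 𝕜 𝔸] {u : 𝕜 → G → 𝔸} {u' : G → 𝔸} {s : Set 𝕜} {x : 𝕜}
    (hu : ∀ m, HasDerivWithinAt (u · m) (u' m) s x) (f : G → 𝔸) :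
    HasDerivWithinAt (fun y => weightedPairing S f (u y) (u y))
      (weightedPairing S f u' (u x) + weightedPairing S f (u x) u') s x := by
  refine (HasDerivWithinAt.fun_sum fun m _ =>
    ((hu m).const_mul (f m)).fun_mul (hu (-m))).congr_deriv ?_
  simp only [weightedPairing, ← sum_add_distrib]

theorem HasDerivWithinAt.tripleProduct_self {𝕜 𝔸 : Type*} [NontriviallyNormedField 𝕜]
    [NormedCommRing 𝔸] [NormedAlgebra 𝕜 𝔸] {u : 𝕜 → G → 𝔸} {u' : G → 𝔸} {s : Set 𝕜} {x : 𝕜}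
    (hu : ∀ m, HasDerivWithinAt (u · m) (u' m) s x) :
    HasDerivWithinAt (fun y => tripleProduct S (u y) (u y) (u y))
      (tripleProduct S u' (u x) (u x) + tripleProduct S (u x) u' (u x)
        + tripleProduct S (u x) (u x) u') s x := by
  refine (HasDerivWithinAt.fun_sum fun k _ => HasDerivWithinAt.fun_sum fun l _ =>
    ((hu k).fun_mul (hu l)).fun_mul (hu (-(k + l)))).congr_deriv ?_
  simp only [tripleProduct, ← sum_add_distrib]
  exact sum_congr rfl fun k _ => sum_congr rfl fun l _ => by ring

theorem HasDerivWithinAt.cubicHamiltonian {𝕜 𝔸 : Type*} [NontriviallyNormedField 𝕜]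
    [NormedField 𝔸] [CharZero 𝔸] [NormedAlgebra 𝕜 𝔸] {u : 𝕜 → G → 𝔸} {u' : G → 𝔸}
    {s : Set 𝕜} {x : 𝕜} (hS : ∀ m, -m ∈ S ↔ m ∈ S) {f : G → 𝔸} (hf : ∀ m, f (-m) = f m)
    (hu : ∀ m, HasDerivWithinAt (u · m) (u' m) s x) (hux : ∀ m ∉ S, u x m = 0)
    (hu' : ∀ m ∉ S, u' m = 0) :
    HasDerivWithinAt (fun y => cubicHamiltonian S f (u y))
      (weightedPairing S f u' (u x) - tripleProduct S u' (u x) (u x) / 2) s x := by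
  refine (((HasDerivWithinAt.weightedPairing_self hu f).div_const 2).sub
    ((HasDerivWithinAt.tripleProduct_self (S := S) hu).div_const 6)).congr_deriv ?_
  rw [weightedPairing_comm hS hf (u x) u', tripleProduct_comm_left (u x) u',
    tripleProduct_swap_left_right hux hu' (u x)]
  ring

/-- `f m * c m - truncConv S c c m / 2` is `∂ (cubicHamiltonian S f c) / ∂ c (-m)`, so `d` is the
gradient of the Hamiltonian times the odd multiplier `w`. -/
theorem cubicHamiltonian_variation_eq_zero {R : Type*} [Field R] [CharZero R]
    (hS : ∀ m, -m ∈ S ↔ m ∈ S) {f w : G → R} (hf : ∀ m, f (-m) = f m)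
    (hw : ∀ m, w (-m) = -w m) {c d : G → R}
    (hd : ∀ m ∈ S, d m = w m * (f m * c m - truncConv S c c m / 2)) :
    weightedPairing S f d c - tripleProduct S d c c / 2 = 0 := by
  set e : G → R := fun m => f m * c m - truncConv S c c m / 2
  calc weightedPairing S f d c - tripleProduct S d c c / 2
      = ∑ m ∈ S, d m * e (-m) := by
        rw [tripleProduct_eq_sum_mul_truncConv, weightedPairing, sum_div, ← sum_sub_distrib]
        exact sum_congr rfl fun m _ => by simp only [e, hf]; ring
    _ = weightedPairing S w e e := sum_congr rfl fun m hm => by rw [hd m hm]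
    _ = 0 := weightedPairing_self_eq_zero_of_odd hS hw e

end Hamiltonian

theorem hasDerivWithinAt_ite_mem {𝕜 G E : Type*} [NontriviallyNormedField 𝕜] [DecidableEq G]
    [NormedAddCommGroup E] [NormedSpace 𝕜 E] {u : 𝕜 → G → E} {u' : G → E} {S : Finset G}
    {s : Set 𝕜} {x : 𝕜} (hx : x ∈ s) (hsupp : ∀ y ∈ s, ∀ m ∉ S, u y m = 0)
    (hu : ∀ m ∈ S, HasDerivWithinAt (u · m) (u' m) s x) (m : G) :
    HasDerivWithinAt (u · m) (if m ∈ S then u' m else 0) s x := by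
  split_ifs with hm
  · exact hu m hm
  · exact (hasDerivWithinAt_const x s 0).congr (fun y hy => hsupp y hy m hm) (hsupp x hx m hm)

theorem neg_mem_box {N : ℕ} (m : ℤ × ℤ) : -m ∈ box N ↔ m ∈ box N := by
  simp only [box, Finset.mem_Icc, Prod.le_def, Prod.fst_neg, Prod.snd_neg]
  omega

theorem fracCoef_neg (α : ℝ) (m : ℤ × ℤ) : fracCoef α (-m) = fracCoef α m := by
  simp [fracCoef]

theorem galerkinRHS_eq (α : ℝ) (N : ℕ) (c : ℤ × ℤ → ℂ) (m : ℤ × ℤ) :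
    galerkinRHS α N c m
      = Complex.I * m.1 * (fracCoef α m * c m - truncConv (box N) c c m / 2) := by
  rw [galerkinRHS, truncConv]
  ring

theorem discreteHamiltonian_eq_re {α : ℝ} {N : ℕ} {c : ℤ × ℤ → ℂ}
    (hc : ∀ k, c (-k) = (starRingEnd ℂ) (c k)) :
    discreteHamiltonian α N c =
      (((2 * Real.pi) ^ 2 : ℝ) * cubicHamiltonian (box N) (fun m => (fracCoef α m : ℂ)) c).re := by
  have hpairing : (weightedPairing (box N) (fun m => (fracCoef α m : ℂ)) c c).re
      = ∑ m ∈ box N, fracCoef α m * ‖c m‖ ^ 2 := by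
    simp only [weightedPairing, Complex.re_sum, hc, mul_assoc, Complex.mul_conj',
      ← Complex.ofReal_pow, ← Complex.ofReal_mul, Complex.ofReal_re]
  rw [discreteHamiltonian, cubicHamiltonian, Complex.re_ofReal_mul, Complex.sub_re,
    Complex.div_ofNat_re, Complex.div_ofNat_re, hpairing, tripleProduct]
  ring

theorem discrete_hamiltonian_conservation_general (α : ℝ)
    (N : ℕ) (T : ℝ) (U : ℝ → ℤ × ℤ → ℂ)
    (hsupp : ∀ t, t ∈ Set.Icc 0 T → ∀ m, m ∉ box N → U t m = 0)
    (hreal : ∀ t, t ∈ Set.Icc 0 T → ∀ k, U t (-k) = (starRingEnd ℂ) (U t k))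
    (hODE : ∀ t ∈ Set.Icc 0 T, ∀ m ∈ box N,
      HasDerivWithinAt (fun s => U s m) (galerkinRHS α N (U t) m) (Set.Icc 0 T) t) :
    ∀ t ∈ Set.Icc 0 T,
      HasDerivWithinAt (fun s => discreteHamiltonian α N (U s)) 0 (Set.Icc 0 T) t := by
  intro t ht
  set d : ℤ × ℤ → ℂ := fun m => if m ∈ box N then galerkinRHS α N (U t) m else 0
  have hd : ∀ m, HasDerivWithinAt (U · m) (d m) (Set.Icc 0 T) t :=
    hasDerivWithinAt_ite_mem ht hsupp (hODE t ht)
  have hH := HasDerivWithinAt.cubicHamiltonian neg_mem_box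
    (f := fun m => (fracCoef α m : ℂ)) (by simp [fracCoef_neg]) hd (hsupp t ht)
    (fun m hm => if_neg hm)
  rw [cubicHamiltonian_variation_eq_zero neg_mem_box (by simp [fracCoef_neg])
    (w := fun m => Complex.I * m.1) (by simp) fun m hm => by simp [d, hm, galerkinRHS_eq]] at hH
  have hre := Complex.reCLM.hasFDerivAt.comp_hasDerivWithinAt t
    (hH.const_mul (((2 * Real.pi) ^ 2 : ℝ) : ℂ))
  rw [mul_zero, map_zero] at hre
  exact hre.congr (fun s hs => discreteHamiltonian_eq_re (hreal s hs))
    (discreteHamiltonian_eq_re (hreal t ht))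

/-- Conservation of the discrete Hamiltonian energy for the semi-discrete
Fourier–Galerkin scheme for the fractional ZK equation: `d/dt H(u_N(t)) = 0`. -/
theorem discrete_hamiltonian_conservation (α : ℝ) (hα : 1 ≤ α) (hα' : α ≤ 2)
    (N : ℕ) (T : ℝ) (hT : 0 < T) (U : ℝ → ℤ × ℤ → ℂ)
    (hsupp : ∀ t, t ∈ Set.Icc 0 T → ∀ m, m ∉ box N → U t m = 0)
    (hreal : ∀ t, t ∈ Set.Icc 0 T → ∀ k, U t (-k) = (starRingEnd ℂ) (U t k))
    (hODE : ∀ t ∈ Set.Icc 0 T, ∀ m ∈ box N,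
      HasDerivWithinAt (fun s => U s m) (galerkinRHS α N (U t) m) (Set.Icc 0 T) t) :
    ∀ t ∈ Set.Icc 0 T,
      HasDerivWithinAt (fun s => discreteHamiltonian α N (U s)) 0 (Set.Icc 0 T) t :=
  discrete_hamiltonian_conservation_general α N T U hsupp hreal hODE
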